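/- Let G ⊆ GL₂(Ẑ) be an open subgroup with conductor m_G, and for each prime ℓ let β_ℓ be the exponent of ℓ in m_G, i.e. m_G = ∏_ℓ ℓ^{β_ℓ}. Define β'_ℓ to be the least integer β ≥ 0 such that for every integer γ with β ≤ γ ≤ max{β, α_ℓ}, one has ker(GL₂(ℤ/ℓ^{γ+1}ℤ) → GL₂(ℤ/ℓ^γℤ)) × {1} ⊆ (π_{ℓ^∞,ℓ^{γ+1}} × id)(G), where GL₂(Ẑ) is identified with GL₂(ℤ_ℓ) × GL₂(ℤ_(ℓ)), π_{ℓ^∞,ℓ^{γ+1}} : GL₂(ℤ_ℓ) → GL₂(ℤ/ℓ^{γ+1}ℤ) is the reduction map and id is the identity on GL₂(ℤ_(ℓ)). Then β_ℓ = β'_ℓ for every prime ℓ. -/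

import Mathlib

open scoped MatrixGroups

/-- `α_ℓ`: 2 if ℓ = 2, else 1. -/
def alphaExp (ℓ : ℕ) : ℕ := if ℓ = 2 then 2 else 1

/-- The map `GL₂(R) → GL₂(S)` induced by a ring hom `R →+* S`. -/
abbrev glMap {R S : Type*} [CommRing R] [CommRing S] (f : R →+* S) :
    GL (Fin 2) R →* GL (Fin 2) S := Matrix.GeneralLinearGroup.map f

/-- `SL₂(R)` viewed as a subgroup of `GL₂(R)`. -/
def SL2subgroup (R : Type*) [CommRing R] : Subgroup (GL (Fin 2) R) :=
  (Matrix.SpecialLinearGroup.toGL (n := Fin 2) (R := R)).range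

/-- `Ẑ`, the profinite completion of `ℤ`, realized as the inverse limit of `ℤ/nℤ`. -/
def ZHat : Subring (∀ n : ℕ+, ZMod n) where
  carrier := {x | ∀ (d n : ℕ+) (h : (d : ℕ) ∣ (n : ℕ)),
    ZMod.castHom h (ZMod (d : ℕ)) (x n) = x d}
  mul_mem' {x y} hx hy := fun d n h => by
    simp only [Pi.mul_apply, map_mul, hx d n h, hy d n h]
  one_mem' := fun d n h => map_one (ZMod.castHom h (ZMod (d : ℕ)))
  add_mem' {x y} hx hy := fun d n h => by
    simp only [Pi.add_apply, map_add, hx d n h, hy d n h]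
  zero_mem' := fun d n h => map_zero (ZMod.castHom h (ZMod (d : ℕ)))
  neg_mem' {x} hx := fun d n h => by
    simp only [Pi.neg_apply, map_neg, hx d n h]

/-- Reduction `Ẑ → ℤ/mℤ`. -/
def ZHat.proj (m : ℕ+) : ZHat →+* ZMod (m : ℕ) :=
  (Pi.evalRingHom (fun n : ℕ+ => ZMod (n : ℕ)) m).comp (Subring.subtype ZHat)

/-- Reduction `GL₂(Ẑ) → GL₂(ℤ/mℤ)`. -/
abbrev GLred (m : ℕ+) : GL (Fin 2) ZHat →* GL (Fin 2) (ZMod (m : ℕ)) :=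
  glMap (ZHat.proj m)

/-- The canonical projection `Ẑ → ℤ_ℓ`. -/
def ZHat.toPadicInt (ℓ : ℕ) [Fact ℓ.Prime] : ZHat →+* ℤ_[ℓ] :=
  PadicInt.lift (f := fun n => ZHat.proj ⟨ℓ ^ n, pow_pos (Nat.Prime.pos Fact.out) n⟩)
    (fun k1 k2 hk => RingHom.ext fun x =>
      x.2 ⟨ℓ ^ k1, pow_pos (Nat.Prime.pos Fact.out) k1⟩
        ⟨ℓ ^ k2, pow_pos (Nat.Prime.pos Fact.out) k2⟩ (pow_dvd_pow ℓ hk))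

/-- `ℤ_(ℓ) = ∏_{p ≠ ℓ} ℤ_p`, realized as the inverse limit of `ℤ/nℤ` over `n` coprime to `ℓ`. -/
def ZHatAway (ℓ : ℕ) : Subring (∀ n : {n : ℕ+ // ¬ (ℓ ∣ (n : ℕ))}, ZMod ((n : ℕ+) : ℕ)) where
  carrier := {x | ∀ (d n : {n : ℕ+ // ¬ (ℓ ∣ (n : ℕ))}) (h : ((d : ℕ+) : ℕ) ∣ ((n : ℕ+) : ℕ)),
    ZMod.castHom h (ZMod ((d : ℕ+) : ℕ)) (x n) = x d}
  mul_mem' {x y} hx hy := fun d n h => by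
    simp only [Pi.mul_apply, map_mul, hx d n h, hy d n h]
  one_mem' := fun d n h => map_one (ZMod.castHom h (ZMod ((d : ℕ+) : ℕ)))
  add_mem' {x y} hx hy := fun d n h => by
    simp only [Pi.add_apply, map_add, hx d n h, hy d n h]
  zero_mem' := fun d n h => map_zero (ZMod.castHom h (ZMod ((d : ℕ+) : ℕ)))
  neg_mem' {x} hx := fun d n h => by
    simp only [Pi.neg_apply, map_neg, hx d n h]

/-- The canonical projection `Ẑ → ℤ_(ℓ)`. -/
def ZHat.away (ℓ : ℕ) : ZHat →+* ZHatAway ℓ where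
  toFun x := ⟨fun n => x.1 n.1, fun d n h => x.2 d.1 n.1 h⟩
  map_one' := rfl
  map_mul' _ _ := rfl
  map_zero' := rfl
  map_add' _ _ := rfl

/-- The radical of a natural number. -/
def radical (n : ℕ) : ℕ := ∏ p ∈ n.primeFactors, p

/-- The modified radical `rad'`. -/
def radical' (n : ℕ) : ℕ := if 4 ∣ n then 2 * radical n else radical n

lemma radical_pos (n : ℕ) : 0 < radical n :=
  Finset.prod_pos fun p hp => (Nat.prime_of_mem_primeFactors hp).pos

lemma radical'_pos (n : ℕ) : 0 < radical' n := by
  unfold radical'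
  split
  · exact Nat.mul_pos two_pos (radical_pos n)
  · exact radical_pos n

lemma radical_dvd (n : ℕ) : radical n ∣ n := Nat.prod_primeFactors_dvd n

lemma radical'_dvd (n : ℕ) : radical' n ∣ n := by
  unfold radical'
  split
  case isTrue h4 =>
    rcases Nat.eq_zero_or_pos n with rfl | hn
    · exact Dvd.intro 0 rfl
    · have h2 : 2 ∈ n.primeFactors :=
        Nat.mem_primeFactors.mpr ⟨Nat.prime_two, dvd_trans ⟨2, rfl⟩ h4, hn.ne'⟩
      set P : ℕ := ∏ p ∈ n.primeFactors.erase 2, p with hP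
      have hrad : radical n = 2 * P := by
        rw [radical, ← Finset.mul_prod_erase _ _ h2]
      have hPdvd : P ∣ n := by
        refine dvd_trans ?_ (radical_dvd n)
        exact Finset.prod_dvd_prod_of_subset _ _ _ (Finset.erase_subset _ _)
      have hPodd : ¬ (2 ∣ P) := by
        intro hdvd
        obtain ⟨p, hp, hpdvd⟩ :=
          (Nat.Prime.prime Nat.prime_two).exists_mem_finset_dvd hdvd
        have hpp := Nat.prime_of_mem_primeFactors (Finset.mem_of_mem_erase hp)
        have : p = 2 := ((Nat.prime_dvd_prime_iff_eq Nat.prime_two hpp).mp hpdvd).symm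
        exact (Finset.ne_of_mem_erase hp) this
      have hcop : Nat.Coprime 4 P := by
        have : Nat.Coprime 2 P := (Nat.Prime.coprime_iff_not_dvd Nat.prime_two).mpr hPodd
        have h4eq : (4 : ℕ) = 2 ^ 2 := by norm_num
        rw [h4eq]
        exact Nat.Coprime.pow_left 2 this
      have : 4 * P ∣ n := hcop.mul_dvd_of_dvd_of_dvd h4 hPdvd
      calc 2 * radical n = 4 * P := by rw [hrad]; ring
        _ ∣ n := this
  case isFalse => exact radical_dvd n

/-!
Write `m_G = ℓ^{β_ℓ} m'` with `ℓ ∤ m'` and use `Ẑ ≅ ℤ_ℓ × ℤ_(ℓ)`. If `γ ≥ β_ℓ`, an element `k`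
of the slice at level `γ` lifts to some `X ∈ GL₂(ℤ_ℓ)`, and `(X, 1)` is trivial modulo `m_G`, hence
lies in `G`; so `β_ℓ` belongs to the set. Conversely, suppose the slices for
`β ≤ γ ≤ max β α_ℓ` are in the image of `G`. For `γ ≥ α_ℓ` one has
`(1 + ℓ^γ N)^ℓ ≡ 1 + ℓ^{γ+1} N (mod ℓ^{γ+2})`, so `ℓ`-th powers carry the slice at level `γ` to
the one at level `γ + 1`, and all slices with `γ ≥ β` are in the image. Peeling off one level of
congruence at a time then shows `ker π_{ℓ^β m'} ⊆ G`, and minimality of `m_G` gives `β_ℓ ≤ β`.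
-/

namespace ZMod

variable {a b n : ℕ}

theorem fst_chineseRemainder (hab : a.Coprime b) (x : ZMod (a * b)) :
    (chineseRemainder hab x).1 = castHom (dvd_mul_right a b) (ZMod a) x :=
  RingHom.congr_fun (Subsingleton.elim ((RingHom.fst _ _).comp (chineseRemainder hab).toRingHom)
    (castHom (dvd_mul_right a b) (ZMod a))) x

theorem snd_chineseRemainder (hab : a.Coprime b) (x : ZMod (a * b)) :
    (chineseRemainder hab x).2 = castHom (dvd_mul_left b a) (ZMod b) x :=
  RingHom.congr_fun (Subsingleton.elim ((RingHom.snd _ _).comp (chineseRemainder hab).toRingHom)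
    (castHom (dvd_mul_left b a) (ZMod b))) x

theorem eq_of_castHom_eq_of_coprime (hab : a.Coprime b) (ha : a ∣ n) (hb : b ∣ n)
    (hn : n ∣ a * b) {x y : ZMod n}
    (hxa : castHom ha (ZMod a) x = castHom ha (ZMod a) y)
    (hxb : castHom hb (ZMod b) x = castHom hb (ZMod b) y) : x = y := by
  obtain rfl : n = a * b := Nat.dvd_antisymm hn (hab.mul_dvd_of_dvd_of_dvd ha hb)
  refine (chineseRemainder hab).injective (Prod.ext ?_ ?_)
  · simpa only [fst_chineseRemainder] using hxa
  · simpa only [snd_chineseRemainder] using hxb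

theorem exists_eq_add_mul_of_castHom_eq {d : ℕ} (h : d ∣ n) {x y : ZMod n}
    (hxy : castHom h (ZMod d) x = castHom h (ZMod d) y) : ∃ z, x = y + d * z := by
  have hdvd : (d : ℤ) ∣ cast (x - y) := by
    rw [← intCast_zmod_eq_zero_iff_dvd, ← map_intCast (castHom h (ZMod d)), intCast_zmod_cast,
      map_sub, hxy, sub_self]
  obtain ⟨t, ht⟩ := hdvd
  refine ⟨t, ?_⟩
  rw [← sub_eq_iff_eq_add', ← intCast_zmod_cast (x - y), ht]
  push_cast
  rfl

end ZMod

namespace Matrix.GeneralLinearGroup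

variable {ι : Type*} [Fintype ι] [DecidableEq ι]

theorem map_surjective {R S : Type*} [CommRing R] [IsLocalRing R] [CommRing S]
    (f : R →+* S) [IsLocalHom f] (hf : Function.Surjective f) :
    Function.Surjective (map (n := ι) f) := by
  intro k
  obtain ⟨M, hM⟩ : ∃ M : Matrix ι ι R, f.mapMatrix M = k :=
    ⟨(k : Matrix ι ι S).map (Function.surjInv hf), by ext; simp [Function.surjInv_eq hf]⟩
  have hdet : IsUnit M.det := isUnit_of_map_unit f _ <| by
    rw [RingHom.map_det, hM]
    exact k.isUnit.map detMonoidHom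
  exact ⟨nonsingInvUnit M hdet, ext fun i j => congrFun (congrFun hM i) j⟩

theorem exists_map_fst_eq_and_map_snd_eq_one {R S : Type*} [CommRing R] [CommRing S]
    (X : GL ι R) :
    ∃ Y : GL ι (R × S), map (RingHom.fst R S) Y = X ∧ map (RingHom.snd R S) Y = 1 := by
  let M : Matrix ι ι (R × S) :=
    Matrix.of fun i j => ((X : Matrix ι ι R) i j, (1 : Matrix ι ι S) i j)
  have hfst : (RingHom.fst R S).mapMatrix M = X := rfl
  have hsnd : (RingHom.snd R S).mapMatrix M = 1 := by ext i j; simp [M, Matrix.one_apply]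
  have hdet : IsUnit M.det := by
    rw [Prod.isUnit_iff, ← RingHom.coe_fst, ← RingHom.coe_snd, RingHom.map_det, RingHom.map_det,
      hfst, hsnd, det_one]
    exact ⟨X.isUnit.map detMonoidHom, isUnit_one⟩
  exact ⟨nonsingInvUnit M hdet, ext fun i j => congrFun (congrFun hfst i) j,
    ext fun i j => congrFun (congrFun hsnd i) j⟩

theorem eq_of_map_castHom_eq_of_coprime {a b n : ℕ} (hab : a.Coprime b) (ha : a ∣ n) (hb : b ∣ n)
    (hn : n ∣ a * b) {u v : GL ι (ZMod n)}
    (hua : map (ZMod.castHom ha (ZMod a)) u = map (ZMod.castHom ha _) v)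
    (hub : map (ZMod.castHom hb (ZMod b)) u = map (ZMod.castHom hb _) v) : u = v :=
  ext fun i j => ZMod.eq_of_castHom_eq_of_coprime hab ha hb hn
    (congrArg (fun w : GL ι (ZMod a) => (w : Matrix ι ι (ZMod a)) i j) hua)
    (congrArg (fun w : GL ι (ZMod b) => (w : Matrix ι ι (ZMod b)) i j) hub)

end Matrix.GeneralLinearGroup

theorem glMap_comp_apply {R S T : Type*} [CommRing R] [CommRing S] [CommRing T] (f : R →+* S)
    (g : S →+* T) (x : GL (Fin 2) R) : glMap (g.comp f) x = glMap g (glMap f x) :=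
  rfl

theorem Matrix.exists_eq_add_natCast_mul_of_map_castHom_eq {ι : Type*} [Fintype ι]
    [DecidableEq ι] {n d : ℕ} (h : d ∣ n) {M M' : Matrix ι ι (ZMod n)}
    (hM : (ZMod.castHom h (ZMod d)).mapMatrix M = (ZMod.castHom h (ZMod d)).mapMatrix M') :
    ∃ C, M = M' + (d : Matrix ι ι (ZMod n)) * C := by
  choose C hC using fun i j =>
    ZMod.exists_eq_add_mul_of_castHom_eq h (congrFun (congrFun hM i) j)
  exact ⟨Matrix.of C, by ext i j; simp [hC i j, ← nsmul_eq_mul]⟩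

theorem one_le_alphaExp (ℓ : ℕ) : 1 ≤ alphaExp ℓ := by
  unfold alphaExp; split <;> omega

theorem Nat.Prime.pow_dvd_choose_mul_pow {p γ i : ℕ} (hp : p.Prime) (hγ : alphaExp p ≤ γ)
    (h2 : 2 ≤ i) (hi : i ≤ p) : p ^ (γ + 2) ∣ p.choose i * p ^ (γ * i) := by
  have hγ1 : 1 ≤ γ := (one_le_alphaExp p).trans hγ
  rcases hi.lt_or_eq with hi | rfl
  · obtain ⟨t, ht⟩ := hp.dvd_choose_self (by omega) hi
    have : γ + 2 ≤ 1 + γ * i := by nlinarith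
    rw [ht, mul_right_comm, ← pow_succ']
    exact dvd_mul_of_dvd_left (pow_dvd_pow p (by omega)) t
  · rw [Nat.choose_self, one_mul]
    refine pow_dvd_pow i ?_
    -- `α_2 = 2` is exactly what makes `γ + 2 ≤ 2 γ` hold for `i = 2`.
    rcases hp.eq_two_or_odd' with rfl | hodd
    · rw [alphaExp, if_pos rfl] at hγ; omega
    · have : 3 ≤ i := by have := hp.two_le; rcases hodd with ⟨k, rfl⟩; omega
      nlinarith

theorem one_add_prime_pow_mul_pow {R : Type*} [Ring R] {p γ : ℕ} (hp : p.Prime)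
    (hγ : alphaExp p ≤ γ) (hR : (p : R) ^ (γ + 2) = 0) (N : R) :
    (1 + (p : R) ^ γ * N) ^ p = 1 + (p : R) ^ (γ + 1) * N := by
  have hterm : ∀ m ∈ Finset.range (p + 1), m ≠ 1 ∧ m ≠ 0 →
      ((p : R) ^ γ * N) ^ m * 1 ^ (p - m) * (p.choose m : R) = 0 := by
    intro m hm ⟨hm1, hm0⟩
    obtain ⟨t, ht⟩ := hp.pow_dvd_choose_mul_pow hγ (by omega)
      (Nat.lt_succ_iff.mp (Finset.mem_range.mp hm))
    rw [one_pow, mul_one, ((Nat.cast_commute p N).pow_left γ).mul_pow, ← pow_mul,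
      ← (Nat.cast_commute _ _).eq, ← mul_assoc, ← Nat.cast_pow, ← Nat.cast_mul, mul_comm,
      ← mul_comm (p.choose m), ht, Nat.cast_mul, Nat.cast_pow, hR, zero_mul, zero_mul]
  rw [add_comm, (Commute.one_right _).add_pow, Finset.sum_eq_add_of_mem 1 0 (by simp [hp.pos])
    (by simp) one_ne_zero hterm]
  simp [pow_succ, mul_assoc, (Nat.cast_commute p _).eq, add_comm]

theorem exists_pow_eq_of_mem_ker {ℓ : ℕ} [hℓ : Fact ℓ.Prime] {γ : ℕ} (hγ : alphaExp ℓ ≤ γ)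
    {k : GL (Fin 2) (ZMod (ℓ ^ (γ + 1 + 1)))}
    (hk : k ∈
      (glMap (ZMod.castHom (pow_dvd_pow ℓ (Nat.le_succ (γ + 1))) (ZMod (ℓ ^ (γ + 1))))).ker) :
    ∃ j ∈ (glMap (ZMod.castHom (pow_dvd_pow ℓ (Nat.le_succ γ)) (ZMod (ℓ ^ γ)))).ker,
      ∀ u, glMap (ZMod.castHom (pow_dvd_pow ℓ (Nat.le_succ (γ + 1))) (ZMod (ℓ ^ (γ + 1)))) u = j →
        u ^ ℓ = k := by
  have hchar : (ℓ : Matrix (Fin 2) (Fin 2) (ZMod (ℓ ^ (γ + 1 + 1)))) ^ (γ + 2) = 0 := by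
    rw [← Nat.cast_pow, CharP.cast_eq_zero]
  obtain ⟨B, hB⟩ := Matrix.exists_eq_add_natCast_mul_of_map_castHom_eq
    (pow_dvd_pow ℓ (Nat.le_succ (γ + 1))) (M := (k : Matrix (Fin 2) (Fin 2) _)) (M' := 1)
    (by rw [map_one]; exact congrArg Units.val (MonoidHom.mem_ker.mp hk))
  rw [Nat.cast_pow] at hB
  -- `U` is an `ℓ`-th root of `k`, and so is every matrix congruent to it modulo `ℓ^{γ+1}`.
  set U := 1 + (ℓ : Matrix (Fin 2) (Fin 2) (ZMod (ℓ ^ (γ + 1 + 1)))) ^ γ * B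
  have hroot : ∀ C, (U + (ℓ : Matrix (Fin 2) (Fin 2) _) ^ (γ + 1) * C) ^ ℓ =
      (k : Matrix (Fin 2) (Fin 2) _) := by
    intro C
    have hUC : U + (ℓ : Matrix (Fin 2) (Fin 2) _) ^ (γ + 1) * C =
        1 + (ℓ : Matrix (Fin 2) (Fin 2) _) ^ γ * (B + (ℓ : Matrix (Fin 2) (Fin 2) _) * C) := by
      simp only [U, mul_add, pow_succ, mul_assoc, add_assoc]
    rw [hUC, one_add_prime_pow_mul_pow hℓ.out hγ hchar, hB, mul_add, ← mul_assoc, ← pow_succ,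
      hchar, zero_mul, add_zero]
  have hU : IsUnit U := by
    have hU0 := hroot 0
    rw [mul_zero, add_zero] at hU0
    exact (isUnit_pow_iff hℓ.out.ne_zero).mp (hU0 ▸ k.isUnit)
  refine ⟨glMap (ZMod.castHom (pow_dvd_pow ℓ (Nat.le_succ (γ + 1))) _) hU.unit, ?_, fun u hu => ?_⟩
  · rw [MonoidHom.mem_ker, ← glMap_comp_apply, ZMod.castHom_comp]
    refine Units.ext ?_
    change (ZMod.castHom _ (ZMod (ℓ ^ γ))).mapMatrix U = 1
    rw [map_add, map_one, map_mul, map_pow, map_natCast, ← Nat.cast_pow, CharP.cast_eq_zero,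
      zero_mul, add_zero]
  · obtain ⟨C, hC⟩ := Matrix.exists_eq_add_natCast_mul_of_map_castHom_eq
      (pow_dvd_pow ℓ (Nat.le_succ (γ + 1))) (M := (u : Matrix (Fin 2) (Fin 2) _)) (M' := U)
      (by exact congrArg Units.val hu)
    exact Units.ext (by rw [Units.val_pow_eq_pow_val, hC, Nat.cast_pow, hroot])

def ZHatAway.proj {ℓ : ℕ} (d : ℕ+) (hd : ¬ ℓ ∣ (d : ℕ)) : ZHatAway ℓ →+* ZMod (d : ℕ) :=
  (Pi.evalRingHom (fun n : {n : ℕ+ // ¬ (ℓ ∣ (n : ℕ))} => ZMod ((n : ℕ+) : ℕ)) ⟨d, hd⟩).comp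
    (ZHatAway ℓ).subtype

theorem ZHatAway.castHom_comp_proj {ℓ : ℕ} {d n : ℕ+} (hd : ¬ ℓ ∣ (d : ℕ)) (hn : ¬ ℓ ∣ (n : ℕ))
    (h : (d : ℕ) ∣ n) : (ZMod.castHom h (ZMod d)).comp (ZHatAway.proj n hn) = ZHatAway.proj d hd :=
  RingHom.ext fun x => x.2 ⟨d, hd⟩ ⟨n, hn⟩ h

namespace ZHat

theorem castHom_comp_proj {d n : ℕ+} (h : (d : ℕ) ∣ n) :
    (ZMod.castHom h (ZMod d)).comp (proj n) = proj d :=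
  RingHom.ext fun x => x.2 d n h

theorem glMap_castHom_GLred {d n : ℕ+} (h : (d : ℕ) ∣ n) (g : GL (Fin 2) ZHat) :
    glMap (ZMod.castHom h (ZMod d)) (GLred n g) = GLred d g := by
  rw [← glMap_comp_apply, castHom_comp_proj]

theorem proj_eq_comp_away {ℓ : ℕ} (d : ℕ+) (hd : ¬ ℓ ∣ (d : ℕ)) :
    proj d = (ZHatAway.proj d hd).comp (away ℓ) :=
  rfl

variable {ℓ : ℕ}

theorem GLred_eq_one_of_away {d : ℕ+} (hd : ¬ ℓ ∣ (d : ℕ)) {g : GL (Fin 2) ZHat}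
    (h : glMap (away ℓ) g = 1) : GLred d g = 1 := by
  rw [GLred, proj_eq_comp_away d hd, glMap_comp_apply, h, map_one]

def coprimePart (ℓ : ℕ) (n : ℕ+) : ℕ+ := ⟨ordCompl[ℓ] n, Nat.ordCompl_pos ℓ n.ne_zero⟩

theorem ordProj_mul_coprimePart (n : ℕ+) : ordProj[ℓ] (n : ℕ) * coprimePart ℓ n = n :=
  Nat.ordProj_mul_ordCompl_eq_self _ _

theorem coprimePart_dvd (n : ℕ+) : (coprimePart ℓ n : ℕ) ∣ n :=
  Nat.ordCompl_dvd _ _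

variable [hℓ : Fact ℓ.Prime]

theorem toZModPow_comp_toPadicInt (c : ℕ) :
    (PadicInt.toZModPow c).comp (toPadicInt ℓ) = proj ⟨ℓ ^ c, pow_pos hℓ.out.pos c⟩ :=
  PadicInt.lift_spec _ c

theorem not_dvd_coprimePart (n : ℕ+) : ¬ ℓ ∣ (coprimePart ℓ n : ℕ) :=
  Nat.not_dvd_ordCompl hℓ.out n.ne_zero

theorem coprime_ordProj_coprimePart (n : ℕ+) :
    (ordProj[ℓ] (n : ℕ)).Coprime (coprimePart ℓ n) :=
  (Nat.coprime_ordCompl hℓ.out n.ne_zero).pow_left _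

theorem castHom_comp_proj_eq_toZModPow {c : ℕ} {n : ℕ+} (h : ℓ ^ c ∣ (n : ℕ)) :
    (ZMod.castHom h (ZMod (ℓ ^ c))).comp (proj n) = (PadicInt.toZModPow c).comp (toPadicInt ℓ) := by
  rw [toZModPow_comp_toPadicInt]
  exact castHom_comp_proj (d := ⟨ℓ ^ c, _⟩) h

theorem glMap_castHom_toZModPow {c' c : ℕ} (h : c' ≤ c) (g : GL (Fin 2) ZHat) :
    glMap (ZMod.castHom (pow_dvd_pow ℓ h) _)
        (glMap ((PadicInt.toZModPow c).comp (toPadicInt ℓ)) g) =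
      glMap ((PadicInt.toZModPow c').comp (toPadicInt ℓ)) g := by
  rw [← glMap_comp_apply, ← RingHom.comp_assoc, PadicInt.zmod_cast_comp_toZModPow _ _ h]

theorem GLred_eq_one_of_toZModPow {n : ℕ+} {c : ℕ} (hc : (n : ℕ).factorization ℓ ≤ c)
    {g : GL (Fin 2) ZHat} (h₁ : glMap ((PadicInt.toZModPow c).comp (toPadicInt ℓ)) g = 1)
    (h₂ : GLred (coprimePart ℓ n) g = 1) : GLred n g = 1 := by
  refine Matrix.GeneralLinearGroup.eq_of_map_castHom_eq_of_coprime
    (coprime_ordProj_coprimePart (ℓ := ℓ) n) (Nat.ordProj_dvd _ _) (coprimePart_dvd n)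
    (ordProj_mul_coprimePart n).symm.dvd ?_ ?_
  · rw [← glMap_comp_apply, castHom_comp_proj_eq_toZModPow, ← glMap_castHom_toZModPow hc, h₁,
      map_one, map_one]
  · rw [glMap_castHom_GLred, h₂, map_one]

variable (ℓ)

noncomputable def glueAt (n : ℕ+) : ℤ_[ℓ] × ZHatAway ℓ →+* ZMod (n : ℕ) :=
  (ZMod.castHom (ordProj_mul_coprimePart n).symm.dvd _).comp <|
    (ZMod.chineseRemainder (coprime_ordProj_coprimePart n)).symm.toRingHom.comp <|
      (PadicInt.toZModPow _).prodMap (ZHatAway.proj (coprimePart ℓ n) (not_dvd_coprimePart n))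

variable {ℓ}

theorem castHom_comp_glueAt_of_pow_dvd {c : ℕ} {n : ℕ+} (h : ℓ ^ c ∣ (n : ℕ)) :
    (ZMod.castHom h (ZMod (ℓ ^ c))).comp (glueAt ℓ n) =
      (PadicInt.toZModPow c).comp (RingHom.fst _ _) := by
  have hc : c ≤ (n : ℕ).factorization ℓ :=
    (hℓ.out.pow_dvd_iff_le_factorization n.ne_zero).mp h
  ext x
  simp only [glueAt, RingHom.comp_apply]
  rw [← RingHom.comp_apply (ZMod.castHom h _), ZMod.castHom_comp,
    ← ZMod.castHom_comp (pow_dvd_pow ℓ hc) (dvd_mul_right _ _), RingHom.comp_apply,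
    ← ZMod.fst_chineseRemainder (coprime_ordProj_coprimePart n)]
  simp [PadicInt.cast_toZModPow _ _ hc]

theorem castHom_comp_glueAt_of_not_dvd {d n : ℕ+} (hd : ¬ ℓ ∣ (d : ℕ)) (h : (d : ℕ) ∣ n) :
    (ZMod.castHom h (ZMod d)).comp (glueAt ℓ n) =
      (ZHatAway.proj d hd).comp (RingHom.snd _ _) := by
  have hcop : (d : ℕ).Coprime (ordProj[ℓ] (n : ℕ)) :=
    ((hℓ.out.coprime_iff_not_dvd.mpr hd).symm).pow_right _
  have hd' : (d : ℕ) ∣ coprimePart ℓ n :=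
    hcop.dvd_of_dvd_mul_left (by rwa [ordProj_mul_coprimePart])
  ext x
  simp only [glueAt, RingHom.comp_apply]
  rw [← RingHom.comp_apply (ZMod.castHom h _), ZMod.castHom_comp,
    ← ZMod.castHom_comp hd' (dvd_mul_left _ _), RingHom.comp_apply,
    ← ZMod.snd_chineseRemainder (coprime_ordProj_coprimePart n)]
  simp [← ZHatAway.castHom_comp_proj hd (not_dvd_coprimePart n) hd']

theorem castHom_comp_glueAt {d n : ℕ+} (h : (d : ℕ) ∣ n) :
    (ZMod.castHom h (ZMod d)).comp (glueAt ℓ n) = glueAt ℓ d := by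
  ext x
  refine ZMod.eq_of_castHom_eq_of_coprime (coprime_ordProj_coprimePart (ℓ := ℓ) d)
    (Nat.ordProj_dvd _ _) (coprimePart_dvd d) (ordProj_mul_coprimePart d).symm.dvd
    ?_ ?_
  · rw [← RingHom.comp_apply, ← RingHom.comp_apply, ← RingHom.comp_assoc, ZMod.castHom_comp,
      castHom_comp_glueAt_of_pow_dvd, castHom_comp_glueAt_of_pow_dvd]
  · rw [← RingHom.comp_apply, ← RingHom.comp_apply, ← RingHom.comp_assoc, ZMod.castHom_comp,
      castHom_comp_glueAt_of_not_dvd (not_dvd_coprimePart d),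
      castHom_comp_glueAt_of_not_dvd (not_dvd_coprimePart d)]

variable (ℓ)

/-- The inverse of the isomorphism `Ẑ ≅ ℤ_ℓ × ℤ_(ℓ)`. -/
noncomputable def glue : ℤ_[ℓ] × ZHatAway ℓ →+* ZHat :=
  (RingHom.pi (glueAt ℓ)).codRestrict ZHat fun x _ _ h =>
    RingHom.congr_fun (castHom_comp_glueAt h) x

theorem toPadicInt_comp_glue : (toPadicInt ℓ).comp (glue ℓ) = RingHom.fst _ _ := by
  refine PadicInt.toZModPow_eq_iff_ext.mp fun c => RingHom.ext fun x => ?_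
  rw [← RingHom.comp_assoc, toZModPow_comp_toPadicInt]
  exact (ZMod.cast_id _ _).symm.trans <|
    RingHom.congr_fun (castHom_comp_glueAt_of_pow_dvd (n := ⟨ℓ ^ c, _⟩) dvd_rfl) x

theorem away_comp_glue : (away ℓ).comp (glue ℓ) = RingHom.snd _ _ := by
  ext x : 1
  refine Subtype.ext (funext fun m => ?_)
  have := RingHom.congr_fun (castHom_comp_glueAt_of_not_dvd (n := m.1) m.2 dvd_rfl) x
  rwa [ZMod.castHom_self] at this

end ZHat

open ZHat

/-- `ker(GL₂(ℤ/ℓ^{γ+1}) → GL₂(ℤ/ℓ^γ)) × {1} ⊆ (π_{ℓ^∞,ℓ^{γ+1}} × id)(G)`. -/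
def ContainsSlice (G : Subgroup (GL (Fin 2) ZHat)) (ℓ : ℕ) [Fact ℓ.Prime] (γ : ℕ) : Prop :=
  ∀ k ∈ (glMap (ZMod.castHom (pow_dvd_pow ℓ (Nat.le_succ γ)) (ZMod (ℓ ^ γ)))).ker,
    ∃ g ∈ G,
      glMap ((PadicInt.toZModPow (p := ℓ) (γ + 1)).comp (ZHat.toPadicInt ℓ)) g = k ∧
      glMap (ZHat.away ℓ) g = 1

variable {G : Subgroup (GL (Fin 2) ZHat)} {ℓ : ℕ} [hℓ : Fact ℓ.Prime]

theorem containsSlice_of_factorization_le {mG : ℕ+} (hker : (GLred mG).ker ≤ G) {γ : ℕ}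
    (hγ : (mG : ℕ).factorization ℓ ≤ γ) : ContainsSlice G ℓ γ := by
  intro k hk
  have hsurj := ZMod.ringHom_surjective (PadicInt.toZModPow (p := ℓ) (γ + 1))
  have : Fact (1 < ℓ ^ (γ + 1)) := ⟨Nat.one_lt_pow γ.succ_ne_zero hℓ.out.one_lt⟩
  have := IsLocalHom.of_surjective _ hsurj
  obtain ⟨X, hX⟩ := Matrix.GeneralLinearGroup.map_surjective _ hsurj k
  obtain ⟨Y, hY₁, hY₂⟩ :=
    Matrix.GeneralLinearGroup.exists_map_fst_eq_and_map_snd_eq_one (S := ZHatAway ℓ) X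
  have hpadic : ∀ c, glMap ((PadicInt.toZModPow c).comp (toPadicInt ℓ)) (glMap (glue ℓ) Y) =
      glMap (PadicInt.toZModPow c) X := fun c => by
    rw [← glMap_comp_apply, RingHom.comp_assoc, toPadicInt_comp_glue, glMap_comp_apply, hY₁]
  have haway : glMap (away ℓ) (glMap (glue ℓ) Y) = 1 := by
    rw [← glMap_comp_apply, away_comp_glue, hY₂]
  refine ⟨_, hker ?_, (hpadic _).trans hX, haway⟩
  refine GLred_eq_one_of_toZModPow hγ ?_ (GLred_eq_one_of_away (not_dvd_coprimePart mG) haway)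
  rw [hpadic, ← PadicInt.zmod_cast_comp_toZModPow γ (γ + 1) γ.le_succ, glMap_comp_apply, hX]
  exact hk

theorem ContainsSlice.succ {γ : ℕ} (h : ContainsSlice G ℓ γ) (hγ : alphaExp ℓ ≤ γ) :
    ContainsSlice G ℓ (γ + 1) := by
  intro k hk
  obtain ⟨j, hj, hroot⟩ := exists_pow_eq_of_mem_ker hγ hk
  obtain ⟨g, hgG, hgj, hg⟩ := h j hj
  refine ⟨g ^ ℓ, pow_mem hgG ℓ, ?_, by rw [map_pow, hg, one_pow]⟩
  rw [map_pow]
  exact hroot _ ((glMap_castHom_toZModPow (Nat.le_succ (γ + 1)) g).trans hgj)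

theorem containsSlice_of_le {β : ℕ}
    (h : ∀ γ, β ≤ γ → γ ≤ max β (alphaExp ℓ) → ContainsSlice G ℓ γ) {γ : ℕ} (hγ : β ≤ γ) :
    ContainsSlice G ℓ γ := by
  induction γ, hγ using Nat.le_induction with
  | base => exact h β le_rfl (le_max_left _ _)
  | succ γ hβγ ih =>
    by_cases hγmax : γ + 1 ≤ max β (alphaExp ℓ)
    · exact h (γ + 1) (by omega) hγmax
    · exact ih.succ (by omega)

theorem mem_of_toZModPow_eq_one {mG : ℕ+} (hker : (GLred mG).ker ≤ G) {β : ℕ}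
    (hsl : ∀ γ, β ≤ γ → ContainsSlice G ℓ γ) {c : ℕ} (hc : β ≤ c) {g : GL (Fin 2) ZHat}
    (h₁ : glMap ((PadicInt.toZModPow c).comp (toPadicInt ℓ)) g = 1)
    (h₂ : GLred (coprimePart ℓ mG) g = 1) : g ∈ G := by
  obtain ⟨t, ht⟩ : ∃ t, (mG : ℕ).factorization ℓ ≤ c + t := ⟨_, Nat.le_add_left _ _⟩
  induction t generalizing c g with
  | zero => exact hker (GLred_eq_one_of_toZModPow ht h₁ h₂)
  | succ t ih =>
    obtain ⟨x, hxG, hx, hxaway⟩ := hsl c hc (glMap ((PadicInt.toZModPow (c + 1)).comp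
      (toPadicInt ℓ)) g) (by rw [MonoidHom.mem_ker, glMap_castHom_toZModPow c.le_succ, h₁])
    have hmem : x⁻¹ * g ∈ G := ih (c := c + 1) (by omega)
      (by rw [map_mul, map_inv, hx, inv_mul_cancel])
      (by rw [map_mul, map_inv, h₂, GLred_eq_one_of_away (not_dvd_coprimePart mG) hxaway,
        inv_one, mul_one]) (by omega)
    simpa using mul_mem hxG hmem

theorem factorization_le_of_containsSlice {mG : ℕ+} (hker : (GLred mG).ker ≤ G)
    (hmin : ∀ k : ℕ+, (GLred k).ker ≤ G → mG ≤ k) {β : ℕ}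
    (hβ : ∀ γ, β ≤ γ → γ ≤ max β (alphaExp ℓ) → ContainsSlice G ℓ γ) :
    (mG : ℕ).factorization ℓ ≤ β := by
  let K : ℕ+ := ⟨ℓ ^ β, pow_pos hℓ.out.pos β⟩ * coprimePart ℓ mG
  have hK : (GLred K).ker ≤ G := fun g hg => by
    refine mem_of_toZModPow_eq_one hker (fun γ => containsSlice_of_le hβ) le_rfl ?_ ?_
    · rw [← castHom_comp_proj_eq_toZModPow (n := K) (dvd_mul_right _ _), glMap_comp_apply,
        MonoidHom.mem_ker.mp hg, map_one]
    · rw [← glMap_castHom_GLred (n := K) (dvd_mul_left _ _), MonoidHom.mem_ker.mp hg, map_one]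
  have hle : ordProj[ℓ] (mG : ℕ) * coprimePart ℓ mG ≤ ℓ ^ β * coprimePart ℓ mG := by
    rw [ordProj_mul_coprimePart]
    exact hmin K hK
  exact (Nat.pow_le_pow_iff_right hℓ.out.one_lt).mp
    (Nat.le_of_mul_le_mul_right hle (coprimePart ℓ mG).pos)

/-- Let `G ⊆ GL₂(Ẑ)` be an open subgroup with conductor `m_G = ∏_ℓ ℓ^{β_ℓ}`.  For
each prime `ℓ`, the exponent `β_ℓ` of `ℓ` in `m_G` is the least `β ≥ 0` such that,
for every `γ` with `β ≤ γ ≤ max {β, α_ℓ}`,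
`ker(GL₂(ℤ/ℓ^{γ+1}ℤ) → GL₂(ℤ/ℓ^γℤ)) × {1} ⊆ (π_{ℓ^∞,ℓ^{γ+1}} × id)(G)` under the
identification `GL₂(Ẑ) ≅ GL₂(ℤ_ℓ) × GL₂(ℤ_(ℓ))`. -/
theorem statement3 (G : Subgroup (GL (Fin 2) ZHat)) (mG : ℕ+)
    (hker : (GLred mG).ker ≤ G)
    (hmin : ∀ k : ℕ+, (GLred k).ker ≤ G → mG ≤ k) :
    ∀ (ℓ : ℕ) [Fact ℓ.Prime],
      IsLeast
        {β : ℕ | ∀ γ : ℕ, β ≤ γ → γ ≤ max β (alphaExp ℓ) →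
          ∀ k ∈ (glMap (ZMod.castHom (pow_dvd_pow ℓ (Nat.le_succ γ)) (ZMod (ℓ ^ γ)))).ker,
            ∃ g ∈ G,
              glMap ((PadicInt.toZModPow (p := ℓ) (γ + 1)).comp (ZHat.toPadicInt ℓ)) g = k ∧
              glMap (ZHat.away ℓ) g = 1}
        ((mG : ℕ).factorization ℓ) := by
  intro ℓ _
  exact ⟨fun γ hγ _ => containsSlice_of_factorization_le hker hγ,
    fun β hβ => factorization_le_of_containsSlice hker hmin hβ⟩
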